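/- arXiv:2605.01897 — 6 statements merged into one kernel-verified Lean document; each statement's English description precedes it below -/
import Mathlib

section
/- Let (W,H) be a critical point of the regularized objective f (in particular, any global minimizer). Assume N_m > 0 and N_m^j > 0 for every m ∈ {1,…,M} and j ∈ [K], and assume κ_m > 0 for every m. For each m fix any constant c_{1,m} > 0 and set γ_{1,m} = (1/(1+c_{1,m}))·m/(K−m), c_{2,m} = (c_{1,m} m/(c_{1,m}+1))·log(m) + (m c_{1,m}/(1+c_{1,m}))·log((c_{1,m}+1)/c_{1,m}) + (m/(c_{1,m}+1))·log((K−m)(c_{1,m}+1)), Γ₂ = (1/N) Σ_{m=1}^M N_m c_{2,m}, ρ = ‖W‖_F², and A_m = sqrt( (1/κ_m) · (m(K−m)/K) · [ 2K/N_m + (2K²/m²)·max_{|S|=m} Σ_{j∈S} 1/N_m^j ] ). Then g(WH) − Γ₂ ≥ −(1/N) Σ_{m=1}^M N_m γ_{1,m} A_m √(λ_W/λ_H) ρ. -/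
open Finset

/-- Softmax probability of coordinate `k` for logits `z ∈ ℝ^K`. -/
noncomputable def softmax {K : ℕ} (z : Fin K → ℝ) (k : Fin K) : ℝ :=
  Real.exp (z k) / ∑ j, Real.exp (z j)

/-- Pick-all-labels (PAL) loss: `L_PAL(z,S) = ∑_{k∈S} -log(softmax(z)_k)`. -/
noncomputable def palLoss {K : ℕ} (z : Fin K → ℝ) (S : Finset (Fin K)) : ℝ :=
  ∑ k ∈ S, -Real.log (softmax z k)

/-- The family of label sets `S ⊆ [K]` with `|S| = m`. -/
def msets (K m : ℕ) : Finset (Finset (Fin K)) := Finset.univ.powersetCard m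

/-- Total sample count `N = ∑_{m=1}^M ∑_{|S|=m} r_{m,S}`. -/
def totalN (K M : ℕ) (r : ℕ → Finset (Fin K) → ℕ) : ℕ :=
  ∑ m ∈ Finset.Icc 1 M, ∑ S ∈ msets K m, r m S

/-- Empirical PAL risk `g(WH)`. -/
noncomputable def empRisk (K d M : ℕ) (r : ℕ → Finset (Fin K) → ℕ)
    (W : Fin K → Fin d → ℝ) (h : ℕ → Finset (Fin K) → ℕ → Fin d → ℝ) : ℝ :=
  (1 / (totalN K M r : ℝ)) *
    ∑ m ∈ Finset.Icc 1 M, ∑ S ∈ msets K m, ∑ i ∈ Finset.range (r m S),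
      palLoss (fun k => ∑ t, W k t * h m S i t) S

/-- Squared Frobenius norm `‖W‖_F²`. -/
noncomputable def wNormSq (K d : ℕ) (W : Fin K → Fin d → ℝ) : ℝ :=
  ∑ k, ∑ t, (W k t) ^ 2

/-- Squared feature norm `‖H‖_F² = ∑_{m,S,i} ‖h_{m,S,i}‖²`. -/
noncomputable def hNormSq (K d M : ℕ) (r : ℕ → Finset (Fin K) → ℕ)
    (h : ℕ → Finset (Fin K) → ℕ → Fin d → ℝ) : ℝ :=
  ∑ m ∈ Finset.Icc 1 M, ∑ S ∈ msets K m, ∑ i ∈ Finset.range (r m S), ∑ t, (h m S i t) ^ 2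

/-- Regularized objective `f(W,H) = g(WH) + (λ_W/2)‖W‖_F² + (λ_H/2)‖H‖_F²`. -/
noncomputable def objective (K d M : ℕ) (r : ℕ → Finset (Fin K) → ℕ) (lW lH : ℝ)
    (W : Fin K → Fin d → ℝ) (h : ℕ → Finset (Fin K) → ℕ → Fin d → ℝ) : ℝ :=
  empRisk K d M r W h + lW / 2 * wNormSq K d W + lH / 2 * hNormSq K d M r h
/-- Group-wise total count `N_m = ∑_{|S|=m} r_{m,S}`. -/
def groupN (K m : ℕ) (rm : Finset (Fin K) → ℕ) : ℕ := ∑ S ∈ msets K m, rm S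

/-- Group-wise class count `N_m^j = ∑_{|S|=m, j∈S} r_{m,S}`. -/
def classN (K m : ℕ) (rm : Finset (Fin K) → ℕ) (j : Fin K) : ℕ :=
  ∑ S ∈ (msets K m).filter (fun S => j ∈ S), rm S

/-- Label second-moment matrix
`G_m(a,b) = ∑_{|S|=m} (r_{m,S}/N_m) 1_S(a) 1_S(b)`. -/
noncomputable def Gmat (K m : ℕ) (rm : Finset (Fin K) → ℕ) (a b : Fin K) : ℝ :=
  ∑ S ∈ msets K m, ((rm S : ℝ) / (groupN K m rm : ℝ)) *
    (if a ∈ S then 1 else 0) * (if b ∈ S then 1 else 0)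

/-- The constant `c_{2,m}` from the affine PAL lower bound, for tuning
constant `c = c_{1,m}`. -/
noncomputable def c2const (K m : ℕ) (c : ℝ) : ℝ :=
  (c * m / (c + 1)) * Real.log m + ((m : ℝ) * c / (1 + c)) * Real.log ((c + 1) / c)
    + ((m : ℝ) / (c + 1)) * Real.log (((K : ℝ) - m) * (c + 1))

/-- Worst-set rarity term `max_{|S|=m} ∑_{j∈S} 1/N_m^j`. -/
noncomputable def maxRare (K m : ℕ) (rm : Finset (Fin K) → ℕ) : ℝ :=
  sSup ((fun S => ∑ j ∈ S, (1 : ℝ) / (classN K m rm j)) '' ↑(msets K m))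

/-- The control quantity
`A_m = sqrt((1/κ_m)·(m(K−m)/K)·[2K/N_m + (2K²/m²)·max_{|S|=m} ∑_{j∈S} 1/N_m^j])`. -/
noncomputable def Aconst (K m : ℕ) (rm : Finset (Fin K) → ℕ) (κm : ℝ) : ℝ :=
  Real.sqrt ((1 / κm) * ((m : ℝ) * ((K : ℝ) - m) / K) *
    (2 * K / (groupN K m rm : ℝ) + (2 * (K : ℝ) ^ 2 / (m : ℝ) ^ 2) * maxRare K m rm))

/-!
The PAL loss is bounded below by an affine function of the logits. By the Gibbs inequality
`log ∑ exp zⱼ ≥ ⟨π, z⟩ + H(π)`, with `π` spreading mass `c/(1+c)` evenly over `S` and `1/(1+c)`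
evenly over its complement, `L_PAL(z, S) ≥ c_{2,m} + γ_{1,m} ⟨v_S, z⟩` where
`v_S = 1 - (K/m) 1_S`. Cauchy–Schwarz bounds `⟨v_S, W h⟩` by `‖v_S‖ ‖W‖ ‖h‖`, and within a group
`∑ ‖hᵢ‖ ≤ √N_m ‖H‖`. At a critical point, the perturbation `((1+s) W, (1-s) H)` changes `W H` only
to second order, so `λ_W ‖W‖² = λ_H ‖H‖²` and `‖H‖ = √(λ_W/λ_H) ‖W‖`. Finally, testing the
definition of `κ_m` on the centred basis vectors gives `κ_m K ≤ m`, whence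
`√(N_m ‖v_S‖²) ≤ N_m A_m`.
-/

theorem sum_ite_mem_eq_sum_add_sum_compl {α : Type*} [Fintype α] [DecidableEq α] (S : Finset α)
    (f g : α → ℝ) : ∑ k, (if k ∈ S then f k else g k) = ∑ k ∈ S, f k + ∑ k ∈ Sᶜ, g k := by
  rw [sum_ite, filter_mem_eq_inter, univ_inter, filter_not, filter_mem_eq_inter, univ_inter,
    compl_eq_univ_sdiff]

theorem sum_indicator_sub_sq {K : ℕ} (T : Finset (Fin K)) (α : ℝ) :
    ∑ k, ((if k ∈ T then 1 else 0) - α) ^ 2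
      = T.card * (1 - α) ^ 2 + ((K : ℝ) - T.card) * α ^ 2 := by
  simp only [apply_ite (· - α), apply_ite (· ^ 2), sum_ite_mem_eq_sum_add_sum_compl, sum_const,
    nsmul_eq_mul, card_compl, Fintype.card_fin]
  rw [Nat.cast_sub (by simpa using card_le_univ T)]
  ring

theorem card_of_mem_msets {K m : ℕ} {S : Finset (Fin K)} (hS : S ∈ msets K m) : S.card = m :=
  (mem_powersetCard.mp hS).2

theorem sum_div_groupN {K m : ℕ} (rm : Finset (Fin K) → ℕ) (hN : 0 < groupN K m rm) :
    ∑ S ∈ msets K m, (rm S : ℝ) / groupN K m rm = 1 := by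
  rw [← sum_div, groupN, Nat.cast_sum, div_self]
  exact_mod_cast (groupN K m rm).pos_iff_ne_zero.mp hN

theorem sum_mul_sub_log_le_log_sum_exp {ι : Type*} (s : Finset ι) (w z : ι → ℝ)
    (hw : ∀ i ∈ s, 0 < w i) (hw1 : ∑ i ∈ s, w i = 1) :
    ∑ i ∈ s, w i * (z i - Real.log (w i)) ≤ Real.log (∑ i ∈ s, Real.exp (z i)) := by
  have jensen := strictConcaveOn_log_Ioi.concaveOn.le_map_sum (fun i hi => (hw i hi).le) hw1
    (p := fun i => Real.exp (z i) / w i) fun i hi => div_pos (Real.exp_pos _) (hw i hi)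
  calc ∑ i ∈ s, w i * (z i - Real.log (w i))
      = ∑ i ∈ s, w i • Real.log (Real.exp (z i) / w i) := sum_congr rfl fun i hi => by
        rw [smul_eq_mul, Real.log_div (Real.exp_ne_zero _) (hw i hi).ne', Real.log_exp]
    _ ≤ Real.log (∑ i ∈ s, w i • (Real.exp (z i) / w i)) := jensen
    _ = Real.log (∑ i ∈ s, Real.exp (z i)) := by
        congr 1
        exact sum_congr rfl fun i hi => by rw [smul_eq_mul, mul_div_cancel₀ _ (hw i hi).ne']

theorem abs_sum_mul_sum_mul_le {ι κ : Type*} [Fintype ι] [Fintype κ] (v : ι → ℝ)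
    (W : ι → κ → ℝ) (x : κ → ℝ) :
    |∑ i, v i * ∑ j, W i j * x j|
      ≤ √(∑ i, v i ^ 2) * √(∑ i, ∑ j, W i j ^ 2) * √(∑ j, x j ^ 2) := by
  have hWx : ∑ i, (∑ j, W i j * x j) ^ 2 ≤ (∑ i, ∑ j, W i j ^ 2) * ∑ j, x j ^ 2 := by
    rw [sum_mul]
    exact sum_le_sum fun i _ => sum_mul_sq_le_sq_mul_sq _ _ _
  calc |∑ i, v i * ∑ j, W i j * x j|
      ≤ √(∑ i, v i ^ 2) * √(∑ i, (∑ j, W i j * x j) ^ 2) := by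
        rw [abs_le]
        constructor
        · rw [neg_le, ← sum_neg_distrib]
          simpa using Real.sum_mul_le_sqrt_mul_sqrt univ (fun i => -v i) _
        · exact Real.sum_mul_le_sqrt_mul_sqrt univ _ _
    _ ≤ √(∑ i, v i ^ 2) * (√(∑ i, ∑ j, W i j ^ 2) * √(∑ j, x j ^ 2)) := by
        rw [← Real.sqrt_mul (sum_nonneg fun i _ => sum_nonneg fun j _ => sq_nonneg _)]
        exact mul_le_mul_of_nonneg_left (Real.sqrt_le_sqrt hWx) (Real.sqrt_nonneg _)
    _ = _ := (mul_assoc _ _ _).symm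

theorem sum_sum_range_sqrt_le {α : Type*} (A : Finset α) (r : α → ℕ) (σ : α → ℕ → ℝ)
    (hσ : ∀ a i, 0 ≤ σ a i) :
    ∑ a ∈ A, ∑ i ∈ range (r a), √(σ a i)
      ≤ √(∑ a ∈ A, (r a : ℝ)) * √(∑ a ∈ A, ∑ i ∈ range (r a), σ a i) := by
  have inner : ∀ a, ∑ i ∈ range (r a), √(σ a i) ≤ √(r a : ℝ) * √(∑ i ∈ range (r a), σ a i) :=
    fun a => by
      simpa using Real.sum_sqrt_mul_sqrt_le (range (r a)) (f := fun _ => 1)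
        (fun _ => zero_le_one) (hσ a)
  calc ∑ a ∈ A, ∑ i ∈ range (r a), √(σ a i)
      ≤ ∑ a ∈ A, √(r a : ℝ) * √(∑ i ∈ range (r a), σ a i) := sum_le_sum fun a _ => inner a
    _ ≤ _ := Real.sum_sqrt_mul_sqrt_le A (fun a => Nat.cast_nonneg _)
        fun a => sum_nonneg fun i _ => hσ a i

theorem deriv_eq_zero_of_even {f : ℝ → ℝ} (hf : ∀ s, f (-s) = f s) : deriv f 0 = 0 := by
  have h := deriv_comp_neg f 0
  simp only [hf, neg_zero] at h
  linarith

theorem neg_log_softmax {K : ℕ} (z : Fin K → ℝ) (k : Fin K) :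
    -Real.log (softmax z k) = Real.log (∑ j, Real.exp (z j)) - z k := by
  have hpos : 0 < ∑ j, Real.exp (z j) := sum_pos (fun j _ => Real.exp_pos _) ⟨k, mem_univ k⟩
  rw [softmax, Real.log_div (Real.exp_ne_zero _) hpos.ne', Real.log_exp]
  ring

theorem palLoss_eq {K : ℕ} (z : Fin K → ℝ) (S : Finset (Fin K)) :
    palLoss z S = S.card * Real.log (∑ j, Real.exp (z j)) - ∑ k ∈ S, z k := by
  simp only [palLoss, neg_log_softmax, sum_sub_distrib, sum_const, nsmul_eq_mul]

theorem differentiable_palLoss {K : ℕ} (S : Finset (Fin K)) :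
    Differentiable ℝ fun z : Fin K → ℝ => palLoss z S := by
  intro z
  simp only [palLoss, neg_log_softmax]
  refine DifferentiableAt.fun_sum fun k _ => ?_
  have hpos : 0 < ∑ j, Real.exp (z j) := sum_pos (fun j _ => Real.exp_pos _) ⟨k, mem_univ k⟩
  have hsum : DifferentiableAt ℝ (fun z : Fin K → ℝ => ∑ j, Real.exp (z j)) z := by fun_prop
  exact (hsum.log hpos.ne').sub (by fun_prop)

-- `γ_{1,m}` and `v_S` of the affine lower bound on the PAL loss
noncomputable def palSlope (K m : ℕ) (c : ℝ) : ℝ := 1 / (1 + c) * ((m : ℝ) / ((K : ℝ) - m))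

noncomputable def palDir (K m : ℕ) (S : Finset (Fin K)) (k : Fin K) : ℝ :=
  if k ∈ S then -(((K : ℝ) - m) / m) else 1

theorem palSlope_nonneg {K m : ℕ} (hmK : m < K) {c : ℝ} (hc : 0 ≤ c) : 0 ≤ palSlope K m c := by
  have : (m : ℝ) < K := by exact_mod_cast hmK
  unfold palSlope
  exact mul_nonneg (by positivity) (div_nonneg (Nat.cast_nonneg m) (by linarith))

theorem sum_palDir_sq {K m : ℕ} {S : Finset (Fin K)} (hS : S.card = m) (hm : 0 < m)
    (hmK : m ≤ K) : ∑ k, palDir K m S k ^ 2 = K * ((K : ℝ) - m) / m := by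
  have hm' : (m : ℝ) ≠ 0 := by positivity
  simp only [palDir, apply_ite (· ^ 2), one_pow, sum_ite_mem_eq_sum_add_sum_compl, sum_const,
    nsmul_eq_mul, card_compl, Fintype.card_fin, hS, Nat.cast_sub hmK, mul_one]
  field_simp
  ring

theorem c2const_eq_neg_mul_sum_mul_log {K m : ℕ} (hm : 0 < m) (hmK : m < K) {c : ℝ}
    (hc : 0 < c) :
    c2const K m c = -m * (c / (1 + c) * Real.log (c / (1 + c) / m)
      + 1 / (1 + c) * Real.log (1 / (1 + c) / ((K : ℝ) - m))) := by
  have hm' : (0 : ℝ) < m := by exact_mod_cast hm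
  have hKm : (0 : ℝ) < (K : ℝ) - m := by
    have : (m : ℝ) < K := by exact_mod_cast hmK
    linarith
  have h1c : (0 : ℝ) < 1 + c := by linarith
  rw [c2const, add_comm c 1, Real.log_div h1c.ne' hc.ne', Real.log_mul hKm.ne' h1c.ne',
    Real.log_div (by positivity) hm'.ne', Real.log_div hc.ne' h1c.ne',
    Real.log_div (by positivity) hKm.ne', one_div, Real.log_inv]
  field_simp
  ring

theorem c2const_add_palSlope_mul_le_palLoss {K m : ℕ} {S : Finset (Fin K)} (hS : S.card = m)
    (hm : 0 < m) (hmK : m < K) {c : ℝ} (hc : 0 < c) (z : Fin K → ℝ) :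
    c2const K m c + palSlope K m c * ∑ k, palDir K m S k * z k ≤ palLoss z S := by
  have hm' : (0 : ℝ) < m := by exact_mod_cast hm
  have hKm : (0 : ℝ) < (K : ℝ) - m := by
    have : (m : ℝ) < K := by exact_mod_cast hmK
    linarith
  have hcardc : ((Sᶜ.card : ℕ) : ℝ) = (K : ℝ) - m := by
    rw [card_compl, Fintype.card_fin, hS, Nat.cast_sub hmK.le]
  rw [c2const_eq_neg_mul_sum_mul_log hm hmK hc]
  set a := c / (1 + c) / m with ha
  set b := 1 / (1 + c) / ((K : ℝ) - m) with hb
  let π : Fin K → ℝ := fun k => if k ∈ S then a else b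
  have hπ : ∀ k ∈ univ, 0 < π k := fun k _ => by
    simp only [π]
    split_ifs <;> positivity
  have hπ1 : ∑ k, π k = 1 := by
    rw [sum_ite_mem_eq_sum_add_sum_compl, sum_const, sum_const, nsmul_eq_mul, nsmul_eq_mul, hS,
      hcardc, ha, hb]
    field_simp
    ring
  have hsplit : ∀ k, π k * (z k - Real.log (π k))
      = if k ∈ S then a * (z k - Real.log a) else b * (z k - Real.log b) := fun k => by
    simp only [π]
    split_ifs <;> rfl
  have gibbs := sum_mul_sub_log_le_log_sum_exp univ π z hπ hπ1
  simp only [hsplit, sum_ite_mem_eq_sum_add_sum_compl, ← mul_sum, sum_sub_distrib, sum_const,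
    nsmul_eq_mul, hS, hcardc] at gibbs
  have key : -m * (c / (1 + c) * Real.log a + 1 / (1 + c) * Real.log b)
        + palSlope K m c * (-(((K : ℝ) - m) / m) * ∑ k ∈ S, z k + ∑ k ∈ Sᶜ, z k)
      = m * (a * (∑ k ∈ S, z k - m * Real.log a)
        + b * (∑ k ∈ Sᶜ, z k - ((K : ℝ) - m) * Real.log b)) - ∑ k ∈ S, z k := by
    rw [palSlope, ha, hb]
    field_simp
    ring
  simp only [palDir, ite_mul, one_mul, sum_ite_mem_eq_sum_add_sum_compl, ← mul_sum]
  rw [palLoss_eq, hS, key]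
  linarith [mul_le_mul_of_nonneg_left gibbs hm'.le]

theorem c2const_sub_le_palLoss_mulVec {K d m : ℕ} {S : Finset (Fin K)} (hS : S.card = m)
    (hm : 0 < m) (hmK : m < K) {c : ℝ} (hc : 0 < c) (W : Fin K → Fin d → ℝ) (x : Fin d → ℝ) :
    c2const K m c - palSlope K m c *
        (√(K * ((K : ℝ) - m) / m) * √(wNormSq K d W) * √(∑ t, x t ^ 2))
      ≤ palLoss (fun k => ∑ t, W k t * x t) S := by
  have hcs : |∑ k, palDir K m S k * ∑ t, W k t * x t|
      ≤ √(K * ((K : ℝ) - m) / m) * √(wNormSq K d W) * √(∑ t, x t ^ 2) := by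
    rw [← sum_palDir_sq hS hm hmK.le]
    exact abs_sum_mul_sum_mul_le (palDir K m S) W x
  have hpal := c2const_add_palSlope_mul_le_palLoss hS hm hmK hc fun k => ∑ t, W k t * x t
  have hlin := (neg_le_neg hcs).trans (neg_abs_le _)
  linarith [mul_le_mul_of_nonneg_left hlin (palSlope_nonneg hmK hc.le)]

theorem wNormSq_add_smul_self {K d : ℕ} (W : Fin K → Fin d → ℝ) (s : ℝ) :
    wNormSq K d (fun k t => W k t + s * W k t) = (1 + s) ^ 2 * wNormSq K d W := by
  simp only [wNormSq, mul_sum]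
  exact sum_congr rfl fun k _ => sum_congr rfl fun t _ => by ring

theorem hNormSq_sub_smul_self {K d M : ℕ} (r : ℕ → Finset (Fin K) → ℕ)
    (h : ℕ → Finset (Fin K) → ℕ → Fin d → ℝ) (s : ℝ) :
    hNormSq K d M r (fun m S i t => h m S i t + s * -h m S i t)
      = (1 - s) ^ 2 * hNormSq K d M r h := by
  simp only [hNormSq, mul_sum]
  exact sum_congr rfl fun m _ => sum_congr rfl fun S _ => sum_congr rfl fun i _ =>
    sum_congr rfl fun t _ => by ring

theorem sum_sq_le_hNormSq {K d M m : ℕ} (r : ℕ → Finset (Fin K) → ℕ)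
    (h : ℕ → Finset (Fin K) → ℕ → Fin d → ℝ) (hm : m ∈ Icc 1 M) :
    ∑ S ∈ msets K m, ∑ i ∈ range (r m S), ∑ t, h m S i t ^ 2 ≤ hNormSq K d M r h :=
  single_le_sum (f := fun m => ∑ S ∈ msets K m, ∑ i ∈ range (r m S), ∑ t, h m S i t ^ 2)
    (fun _ _ => sum_nonneg fun _ _ => sum_nonneg fun _ _ => sum_nonneg fun _ _ => sq_nonneg _) hm

theorem mul_wNormSq_eq_mul_hNormSq_of_deriv_eq_zero {K d M : ℕ} (r : ℕ → Finset (Fin K) → ℕ)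
    (lW lH : ℝ) (W : Fin K → Fin d → ℝ) (h : ℕ → Finset (Fin K) → ℕ → Fin d → ℝ)
    (hcrit : deriv (fun s : ℝ => objective K d M r lW lH (fun k t => W k t + s * W k t)
      (fun m S i t => h m S i t + s * -h m S i t)) 0 = 0) :
    lW * wNormSq K d W = lH * hNormSq K d M r h := by
  set E : ℝ → ℝ := fun s => empRisk K d M r (fun k t => W k t + s * W k t)
    (fun m S i t => h m S i t + s * -h m S i t)
  -- the logits along the path are `(1 - s²) W h`
  have heven : ∀ s, E (-s) = E s := fun s => by
    simp only [E, empRisk]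
    refine congrArg _ (sum_congr rfl fun m _ => sum_congr rfl fun S _ =>
      sum_congr rfl fun i _ => ?_)
    congr 1
    funext k
    exact sum_congr rfl fun t _ => by ring
  have hdiff : DifferentiableAt ℝ E 0 := by
    have := fun S => differentiable_palLoss (K := K) S
    simp only [E, empRisk]
    fun_prop
  have hE : HasDerivAt E 0 0 := by
    simpa [deriv_eq_zero_of_even heven] using hdiff.hasDerivAt
  have hq : HasDerivAt (fun s : ℝ => lW / 2 * ((1 + s) ^ 2 * wNormSq K d W)
      + lH / 2 * ((1 - s) ^ 2 * hNormSq K d M r h))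
      (lW * wNormSq K d W - lH * hNormSq K d M r h) 0 := by
    have hW := ((((hasDerivAt_id (0 : ℝ)).const_add 1).pow 2).mul_const
      (wNormSq K d W)).const_mul (lW / 2)
    have hH := ((((hasDerivAt_id (0 : ℝ)).const_sub 1).pow 2).mul_const
      (hNormSq K d M r h)).const_mul (lH / 2)
    exact (hW.add hH).congr_deriv (by simp only [id, add_zero, sub_zero]; ring)
  have hpath := (hE.add hq).deriv
  rw [zero_add] at hpath
  rw [← sub_eq_zero, ← hpath, ← hcrit]
  congr 1
  funext s
  simp only [Pi.add_apply, objective, wNormSq_add_smul_self, hNormSq_sub_smul_self, E, add_assoc]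

theorem quadForm_Gmat (K m : ℕ) (rm : Finset (Fin K) → ℕ) (x : Fin K → ℝ) :
    ∑ a, ∑ b, x a * Gmat K m rm a b * x b
      = ∑ S ∈ msets K m, (rm S : ℝ) / groupN K m rm * (∑ a ∈ S, x a) ^ 2 := by
  have hsq : ∀ S : Finset (Fin K), (∑ a ∈ S, x a) ^ 2
      = ∑ a, ∑ b, (if a ∈ S then x a else 0) * (if b ∈ S then x b else 0) := fun S => by
    rw [sq, ← sum_mul_sum, sum_ite_mem, univ_inter]
  simp only [hsq, mul_sum]
  conv_rhs => rw [sum_comm]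
  refine sum_congr rfl fun a _ => ?_
  conv_rhs => rw [sum_comm]
  refine sum_congr rfl fun b _ => ?_
  rw [Gmat, mul_sum, sum_mul]
  refine sum_congr rfl fun S _ => ?_
  split_ifs <;> ring

theorem mul_sub_one_le_of_forall_centered_le_quadForm {K m : ℕ} (hm : 0 < m) (hmK : m ≤ K)
    (rm : Finset (Fin K) → ℕ) (hN : 0 < groupN K m rm) {κ : ℝ}
    (hκ : ∀ x : Fin K → ℝ, ∑ k, x k = 0 →
      κ * ∑ k, x k ^ 2 ≤ ∑ a, ∑ b, x a * Gmat K m rm a b * x b) :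
    κ * ((K : ℝ) - 1) ≤ m * ((K : ℝ) - m) / K := by
  have hK : (K : ℝ) ≠ 0 := Nat.cast_ne_zero.mpr (by omega)
  -- test on the centred basis vectors `e_j - 1/K`, then sum over `j`
  let x : Fin K → Fin K → ℝ := fun j k => (if k ∈ ({j} : Finset (Fin K)) then 1 else 0) - 1 / K
  have hcenter : ∀ j, ∑ k, x j k = 0 := fun j => by
    simp only [x, sum_sub_distrib, sum_ite_mem, univ_inter, sum_const, card_singleton,
      card_univ, Fintype.card_fin, nsmul_eq_mul]
    field_simp
    ring
  have hnorm : ∀ j, ∑ k, x j k ^ 2 = ((K : ℝ) - 1) / K := fun j => by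
    simp only [x, sum_indicator_sub_sq, card_singleton]
    field_simp
    ring
  have hS : ∀ j, ∀ S ∈ msets K m, ∑ a ∈ S, x j a = (if j ∈ S then 1 else 0) - m / K :=
    fun j S hS => by
      simp only [x, mem_singleton, sum_sub_distrib, sum_ite_eq', sum_const,
        card_of_mem_msets hS, nsmul_eq_mul]
      ring
  have hsum := sum_le_sum fun j (_ : j ∈ univ) => hκ (x j) (hcenter j)
  simp only [hnorm, quadForm_Gmat] at hsum
  have hrhs : ∑ j, ∑ S ∈ msets K m, (rm S : ℝ) / groupN K m rm * (∑ a ∈ S, x j a) ^ 2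
      = m * ((K : ℝ) - m) / K := by
    rw [sum_comm]
    calc ∑ S ∈ msets K m, ∑ j, (rm S : ℝ) / groupN K m rm * (∑ a ∈ S, x j a) ^ 2
        = ∑ S ∈ msets K m, (rm S : ℝ) / groupN K m rm * (m * ((K : ℝ) - m) / K) :=
          sum_congr rfl fun S hS' => by
            rw [← mul_sum, sum_congr rfl fun j _ => by rw [hS j S hS'], sum_indicator_sub_sq,
              card_of_mem_msets hS']
            field_simp
            ring
      _ = m * ((K : ℝ) - m) / K := by rw [← sum_mul, sum_div_groupN rm hN, one_mul]
  rw [hrhs, sum_const, card_univ, Fintype.card_fin, nsmul_eq_mul] at hsum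
  calc κ * ((K : ℝ) - 1) = K * (κ * (((K : ℝ) - 1) / K)) := by field_simp
    _ ≤ _ := hsum

theorem maxRare_nonneg (K m : ℕ) (rm : Finset (Fin K) → ℕ) : 0 ≤ maxRare K m rm :=
  Real.sSup_nonneg <| by
    rintro _ ⟨S, -, rfl⟩
    exact sum_nonneg fun j _ => by positivity

theorem sqrt_le_groupN_mul_Aconst {K m : ℕ} (hm : 0 < m) (hmK : m < K)
    (rm : Finset (Fin K) → ℕ) (hN : 0 < groupN K m rm) {κ : ℝ} (hκ : 0 < κ)
    (hκle : κ * ((K : ℝ) - 1) ≤ m * ((K : ℝ) - m) / K) :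
    √(groupN K m rm * (K * ((K : ℝ) - m) / m)) ≤ groupN K m rm * Aconst K m rm κ := by
  set N : ℝ := (groupN K m rm : ℝ)
  have hN' : 0 < N := Nat.cast_pos.mpr hN
  have hm' : (1 : ℝ) ≤ m := by exact_mod_cast hm
  have hK1 : (1 : ℝ) < K := by exact_mod_cast (show 1 < K by omega)
  have hKm : (0 : ℝ) < (K : ℝ) - m := by
    have : (m : ℝ) < K := by exact_mod_cast hmK
    linarith
  have hκK : κ * K ≤ m := by
    rw [le_div_iff₀ (by linarith)] at hκle
    nlinarith
  -- the `maxRare` part of `A_m` is only bounded below by `0`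
  have hmain : N * (K * ((K : ℝ) - m) / m) ≤ N ^ 2 * (1 / κ * (m * ((K : ℝ) - m) / K) *
      (2 * K / N + 2 * (K : ℝ) ^ 2 / (m : ℝ) ^ 2 * maxRare K m rm)) := by
    have hrare := maxRare_nonneg K m rm
    calc N * (K * ((K : ℝ) - m) / m)
        ≤ N ^ 2 * (1 / κ * (m * ((K : ℝ) - m) / K) * (2 * K / N)) := by
          rw [show N ^ 2 * (1 / κ * (m * ((K : ℝ) - m) / K) * (2 * K / N))
            = N * ((K : ℝ) - m) * (2 * m / κ) by field_simp,
            show N * (K * ((K : ℝ) - m) / m) = N * ((K : ℝ) - m) * (K / m) by ring]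
          refine mul_le_mul_of_nonneg_left ?_ (by positivity)
          rw [div_le_div_iff₀ (by positivity) hκ]
          nlinarith
      _ ≤ _ := by
          gcongr
          nlinarith [mul_nonneg (by positivity : (0 : ℝ) ≤ 2 * K ^ 2 / m ^ 2) hrare]
  calc √(N * (K * ((K : ℝ) - m) / m)) ≤ √(N ^ 2 * _) := Real.sqrt_le_sqrt hmain
    _ = N * Aconst K m rm κ := by rw [Real.sqrt_mul (sq_nonneg N), Real.sqrt_sq hN'.le, Aconst]

theorem groupN_mul_c2const_sub_le_sum_palLoss {K d m : ℕ} (hm : 0 < m) (hmK : m < K)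
    (rm : Finset (Fin K) → ℕ) (hN : 0 < groupN K m rm) {κ : ℝ} (hκ : 0 < κ)
    (hκG : ∀ x : Fin K → ℝ, ∑ k, x k = 0 →
      κ * ∑ k, x k ^ 2 ≤ ∑ a, ∑ b, x a * Gmat K m rm a b * x b)
    {c : ℝ} (hc : 0 < c) (W : Fin K → Fin d → ℝ) (x : Finset (Fin K) → ℕ → Fin d → ℝ) {a : ℝ}
    (ha : 0 ≤ a)
    (hx : ∑ S ∈ msets K m, ∑ i ∈ range (rm S), ∑ t, x S i t ^ 2 ≤ a * wNormSq K d W) :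
    groupN K m rm * c2const K m c
        - groupN K m rm * palSlope K m c * Aconst K m rm κ * √a * wNormSq K d W
      ≤ ∑ S ∈ msets K m, ∑ i ∈ range (rm S), palLoss (fun k => ∑ t, W k t * x S i t) S := by
  set N : ℝ := (groupN K m rm : ℝ)
  set ρ := wNormSq K d W
  set C := palSlope K m c * √(K * ((K : ℝ) - m) / m) * √ρ
  have hρ : 0 ≤ ρ := sum_nonneg fun k _ => sum_nonneg fun t _ => sq_nonneg _
  have hslope := palSlope_nonneg hmK hc.le
  have hC : 0 ≤ C := mul_nonneg (mul_nonneg hslope (Real.sqrt_nonneg _)) (Real.sqrt_nonneg _)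
  have hsqrt : ∑ S ∈ msets K m, ∑ i ∈ range (rm S), √(∑ t, x S i t ^ 2) ≤ √N * √(a * ρ) := by
    refine (sum_sum_range_sqrt_le _ rm _ fun S i => sum_nonneg fun t _ => sq_nonneg _).trans ?_
    rw [← Nat.cast_sum]
    exact mul_le_mul_of_nonneg_left (Real.sqrt_le_sqrt hx) (Real.sqrt_nonneg _)
  have hA := sqrt_le_groupN_mul_Aconst hm hmK rm hN hκ
    (mul_sub_one_le_of_forall_centered_le_quadForm hm hmK.le rm hN hκG)
  have hCN : C * (√N * √(a * ρ)) = palSlope K m c * √(N * (K * ((K : ℝ) - m) / m)) * √a * ρ := by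
    rw [Real.sqrt_mul ha, Real.sqrt_mul (Nat.cast_nonneg _)]
    linear_combination (palSlope K m c * √N * √(K * ((K : ℝ) - m) / m) * √a)
      * Real.mul_self_sqrt hρ
  calc N * c2const K m c - N * palSlope K m c * Aconst K m rm κ * √a * ρ
      ≤ N * c2const K m c - C * (√N * √(a * ρ)) := by
        have hle : palSlope K m c * √(N * (K * ((K : ℝ) - m) / m)) * √a * ρ
            ≤ palSlope K m c * (N * Aconst K m rm κ) * √a * ρ := by gcongr
        linarith
    _ ≤ N * c2const K m c - C * ∑ S ∈ msets K m, ∑ i ∈ range (rm S), √(∑ t, x S i t ^ 2) := by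
        gcongr
    _ = ∑ S ∈ msets K m, ∑ i ∈ range (rm S), (c2const K m c - C * √(∑ t, x S i t ^ 2)) := by
        simp only [sum_sub_distrib, sum_const, card_range, nsmul_eq_mul, mul_sum, ← sum_mul]
        simp only [N, groupN, Nat.cast_sum]
    _ ≤ _ := sum_le_sum fun S hS => sum_le_sum fun i _ => by
        simpa [C, mul_assoc] using
          c2const_sub_le_palLoss_mulVec (card_of_mem_msets hS) hm hmK hc W (x S i)

theorem spectral_lower_bound_general {K d M : ℕ} (hMK : M ≤ K - 1)
    (r : ℕ → Finset (Fin K) → ℕ)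
    (hNm : ∀ m ∈ Finset.Icc 1 M, 0 < groupN K m (r m))
    (lW lH : ℝ) (hlW : 0 < lW) (hlH : 0 < lH)
    (W : Fin K → Fin d → ℝ) (h : ℕ → Finset (Fin K) → ℕ → Fin d → ℝ)
    (hcrit : ∀ (ΔW : Fin K → Fin d → ℝ) (Δh : ℕ → Finset (Fin K) → ℕ → Fin d → ℝ),
      deriv (fun s : ℝ => objective K d M r lW lH
        (fun k t => W k t + s * ΔW k t)
        (fun m S i t => h m S i t + s * Δh m S i t)) 0 = 0)
    (κ : ℕ → ℝ) (hκpos : ∀ m ∈ Finset.Icc 1 M, 0 < κ m)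
    (hκ : ∀ m ∈ Finset.Icc 1 M,
      IsGreatest {c : ℝ | ∀ x : Fin K → ℝ, (∑ k, x k) = 0 →
        c * (∑ k, (x k) ^ 2) ≤ ∑ a : Fin K, ∑ b : Fin K, x a * Gmat K m (r m) a b * x b}
        (κ m))
    (c1 : ℕ → ℝ) (hc1 : ∀ m ∈ Finset.Icc 1 M, 0 < c1 m) :
    empRisk K d M r W h
        - (1 / (totalN K M r : ℝ)) *
            (∑ m ∈ Finset.Icc 1 M, (groupN K m (r m) : ℝ) * c2const K m (c1 m))
      ≥ -((1 / (totalN K M r : ℝ)) *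
          ∑ m ∈ Finset.Icc 1 M,
            (groupN K m (r m) : ℝ) * ((1 / (1 + c1 m)) * ((m : ℝ) / ((K : ℝ) - m)))
              * Aconst K m (r m) (κ m) * Real.sqrt (lW / lH) * wNormSq K d W) := by
  have hbal := mul_wNormSq_eq_mul_hNormSq_of_deriv_eq_zero r lW lH W h
    (hcrit W fun m S i t => -h m S i t)
  have hH : hNormSq K d M r h = lW / lH * wNormSq K d W := by
    field_simp
    linarith
  have hgroup : ∀ m ∈ Icc 1 M, (groupN K m (r m) : ℝ) * c2const K m (c1 m)
      - groupN K m (r m) * palSlope K m (c1 m) * Aconst K m (r m) (κ m) * √(lW / lH)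
        * wNormSq K d W
      ≤ ∑ S ∈ msets K m, ∑ i ∈ range (r m S), palLoss (fun k => ∑ t, W k t * h m S i t) S :=
    fun m hm => by
      obtain ⟨hm0, hmM⟩ := mem_Icc.mp hm
      exact groupN_mul_c2const_sub_le_sum_palLoss hm0 (by omega) (r m) (hNm m hm) (hκpos m hm)
        (hκ m hm).1 (hc1 m hm) W (h m) (div_nonneg hlW.le hlH.le) (hH ▸ sum_sq_le_hNormSq r h hm)
  have hsum := mul_le_mul_of_nonneg_left (sum_le_sum hgroup)
    (by positivity : (0 : ℝ) ≤ 1 / (totalN K M r : ℝ))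
  rw [sum_sub_distrib, mul_sub] at hsum
  rw [empRisk]
  simp only [palSlope] at hsum
  linarith

/-- Let `(W,H)` be a critical point of the regularized objective `f`
(all directional derivatives vanish). Assume `N_m > 0`, `N_m^j > 0`, and `κ_m > 0`
(with `κ_m` the largest constant with `xᵀG_mx ≥ κ_m‖x‖²` on centered `x`) for every
`m ∈ {1,…,M}` and `j ∈ [K]`; fix any `c_{1,m} > 0`. Then, with
`γ_{1,m} = (1/(1+c_{1,m}))·m/(K−m)`, `Γ₂ = (1/N)∑_m N_m c_{2,m}`, and `ρ = ‖W‖_F²`,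
`g(WH) − Γ₂ ≥ −(1/N) ∑_{m=1}^M N_m γ_{1,m} A_m √(λ_W/λ_H) ρ`. -/
theorem spectral_lower_bound {K d M : ℕ} (hK : 2 ≤ K) (hd : 1 ≤ d)
    (hM1 : 1 ≤ M) (hMK : M ≤ K - 1)
    (r : ℕ → Finset (Fin K) → ℕ)
    (hNm : ∀ m ∈ Finset.Icc 1 M, 0 < groupN K m (r m))
    (hNmj : ∀ m ∈ Finset.Icc 1 M, ∀ j : Fin K, 0 < classN K m (r m) j)
    (lW lH : ℝ) (hlW : 0 < lW) (hlH : 0 < lH)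
    (W : Fin K → Fin d → ℝ) (h : ℕ → Finset (Fin K) → ℕ → Fin d → ℝ)
    (hcrit : ∀ (ΔW : Fin K → Fin d → ℝ) (Δh : ℕ → Finset (Fin K) → ℕ → Fin d → ℝ),
      deriv (fun s : ℝ => objective K d M r lW lH
        (fun k t => W k t + s * ΔW k t)
        (fun m S i t => h m S i t + s * Δh m S i t)) 0 = 0)
    (κ : ℕ → ℝ) (hκpos : ∀ m ∈ Finset.Icc 1 M, 0 < κ m)
    (hκ : ∀ m ∈ Finset.Icc 1 M,
      IsGreatest {c : ℝ | ∀ x : Fin K → ℝ, (∑ k, x k) = 0 →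
        c * (∑ k, (x k) ^ 2) ≤ ∑ a : Fin K, ∑ b : Fin K, x a * Gmat K m (r m) a b * x b}
        (κ m))
    (c1 : ℕ → ℝ) (hc1 : ∀ m ∈ Finset.Icc 1 M, 0 < c1 m) :
    empRisk K d M r W h
        - (1 / (totalN K M r : ℝ)) *
            (∑ m ∈ Finset.Icc 1 M, (groupN K m (r m) : ℝ) * c2const K m (c1 m))
      ≥ -((1 / (totalN K M r : ℝ)) *
          ∑ m ∈ Finset.Icc 1 M,
            (groupN K m (r m) : ℝ) * ((1 / (1 + c1 m)) * ((m : ℝ) / ((K : ℝ) - m)))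
              * Aconst K m (r m) (κ m) * Real.sqrt (lW / lH) * wNormSq K d W) :=
  spectral_lower_bound_general hMK r hNm lW lH hlW hlH W h hcrit κ hκpos hκ c1 hc1
end

section
/- If (W,H) is a global minimizer of the regularized objective f, then the classifier rows are centered: Σ_{k=1}^K w_k = 0; equivalently, ΠW = W. -/
open Finset

/-! Softmax is invariant under adding a constant to all logits, so replacing `W` by `ΠW`
leaves the empirical risk unchanged, while `‖ΠW‖_F² = ‖W‖_F² - (1/K) ∑_t (∑_k W k t)²`.
At a global minimizer this decrease must be zero, so every column sum of `W` vanishes. -/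

theorem softmax_add_const {K : ℕ} (z : Fin K → ℝ) (c : ℝ) :
    softmax (fun j => z j + c) = softmax z := by
  funext k
  simp only [softmax, Real.exp_add, ← sum_mul]
  exact mul_div_mul_right _ _ (Real.exp_ne_zero c)

theorem palLoss_add_const {K : ℕ} (z : Fin K → ℝ) (c : ℝ) (S : Finset (Fin K)) :
    palLoss (fun j => z j + c) S = palLoss z S := by
  simp only [palLoss, softmax_add_const]

theorem empRisk_sub_common_row (K d M : ℕ) (r : ℕ → Finset (Fin K) → ℕ)
    (W : Fin K → Fin d → ℝ) (a : Fin d → ℝ) (h : ℕ → Finset (Fin K) → ℕ → Fin d → ℝ) :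
    empRisk K d M r (fun k t => W k t - a t) h = empRisk K d M r W h := by
  have hlogits : ∀ x : Fin d → ℝ, (fun k => ∑ t, (W k t - a t) * x t)
      = fun k => ∑ t, W k t * x t + -∑ t, a t * x t := by
    intro x
    funext k
    rw [← sub_eq_add_neg, ← sum_sub_distrib]
    simp only [sub_mul]
  simp only [empRisk, hlogits, palLoss_add_const]

theorem sum_sub_mean_sq {ι : Type*} [Fintype ι] (x : ι → ℝ) :
    ∑ i, (x i - 1 / (Fintype.card ι : ℝ) * ∑ j, x j) ^ 2
      = ∑ i, x i ^ 2 - (∑ i, x i) ^ 2 / Fintype.card ι := by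
  rcases isEmpty_or_nonempty ι with hι | hι
  · simp
  have hcard : (Fintype.card ι : ℝ) ≠ 0 := by positivity
  simp only [sub_sq, sum_add_distrib, sum_sub_distrib, sum_const, card_univ, nsmul_eq_mul,
    ← sum_mul, ← mul_sum]
  field_simp
  ring

theorem sum_eq_zero_of_sq_sum_div_card_eq_zero {ι : Type*} [Fintype ι] (x : ι → ℝ)
    (h : (∑ i, x i) ^ 2 / Fintype.card ι = 0) : ∑ i, x i = 0 := by
  rcases isEmpty_or_nonempty ι with hι | hι
  · simp
  have hcard : (Fintype.card ι : ℝ) ≠ 0 := by positivity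
  simpa [hcard] using h

/-- The centered classifier `ΠW`. -/
noncomputable def centerRows {K d : ℕ} (W : Fin K → Fin d → ℝ) : Fin K → Fin d → ℝ :=
  fun k t => W k t - 1 / (K : ℝ) * ∑ l, W l t

theorem wNormSq_centerRows {K d : ℕ} (W : Fin K → Fin d → ℝ) :
    wNormSq K d (centerRows W) = wNormSq K d W - ∑ t, (∑ k, W k t) ^ 2 / K := by
  have hcol : ∀ t, ∑ k, centerRows W k t ^ 2 = ∑ k, W k t ^ 2 - (∑ k, W k t) ^ 2 / K := by
    intro t
    simp only [centerRows]
    simpa only [Fintype.card_fin] using sum_sub_mean_sq (W · t)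
  simp only [wNormSq]
  rw [sum_comm, sum_comm (f := fun k t => W k t ^ 2), ← sum_sub_distrib]
  exact sum_congr rfl fun t _ => hcol t

theorem objective_centerRows {K d M : ℕ} (r : ℕ → Finset (Fin K) → ℕ) (lW lH : ℝ)
    (W : Fin K → Fin d → ℝ) (h : ℕ → Finset (Fin K) → ℕ → Fin d → ℝ) :
    objective K d M r lW lH (centerRows W) h
      = objective K d M r lW lH W h - lW / 2 * ∑ t, (∑ k, W k t) ^ 2 / K := by
  have hrisk : empRisk K d M r (centerRows W) h = empRisk K d M r W h :=
    empRisk_sub_common_row K d M r W (fun t => 1 / (K : ℝ) * ∑ l, W l t) h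
  simp only [objective, wNormSq_centerRows, hrisk]
  ring

theorem classifier_centering_at_global_min_general {K d M : ℕ}
    (r : ℕ → Finset (Fin K) → ℕ)
    (lW lH : ℝ) (hlW : 0 < lW)
    (W : Fin K → Fin d → ℝ) (h : ℕ → Finset (Fin K) → ℕ → Fin d → ℝ)
    (hmin : ∀ (W' : Fin K → Fin d → ℝ) (h' : ℕ → Finset (Fin K) → ℕ → Fin d → ℝ),
      objective K d M r lW lH W h ≤ objective K d M r lW lH W' h') :
    (∀ t : Fin d, ∑ k : Fin K, W k t = 0) ∧
      (fun k t => W k t - (1 / (K : ℝ)) * ∑ l : Fin K, W l t) = W := by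
  have hterm_nonneg : ∀ t ∈ univ, 0 ≤ (∑ k, W k t) ^ 2 / K := fun t _ => by positivity
  have hdeficit : lW / 2 * ∑ t, (∑ k, W k t) ^ 2 / K ≤ 0 := by
    have := hmin (centerRows W) h
    rw [objective_centerRows] at this
    linarith
  have hterm_zero := (sum_eq_zero_iff_of_nonneg hterm_nonneg).mp <|
    le_antisymm (nonpos_of_mul_nonpos_right hdeficit (by positivity)) (sum_nonneg hterm_nonneg)
  have hcol : ∀ t, ∑ k, W k t = 0 := fun t =>
    sum_eq_zero_of_sq_sum_div_card_eq_zero (W · t) (by simpa using hterm_zero t (mem_univ t))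
  refine ⟨hcol, ?_⟩
  funext k t
  simp only [hcol t, mul_zero, sub_zero]

/-- At any global minimizer `(W,H)` of the regularized objective `f`,
the classifier rows are centered: `∑_{k=1}^K w_k = 0`; equivalently, `ΠW = W`. -/
theorem classifier_centering_at_global_min {K d M : ℕ} (hK : 2 ≤ K) (hd : 1 ≤ d)
    (hM1 : 1 ≤ M) (hMK : M ≤ K - 1)
    (r : ℕ → Finset (Fin K) → ℕ) (hN : 0 < totalN K M r)
    (lW lH : ℝ) (hlW : 0 < lW) (hlH : 0 < lH)
    (W : Fin K → Fin d → ℝ) (h : ℕ → Finset (Fin K) → ℕ → Fin d → ℝ)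
    (hmin : ∀ (W' : Fin K → Fin d → ℝ) (h' : ℕ → Finset (Fin K) → ℕ → Fin d → ℝ),
      objective K d M r lW lH W h ≤ objective K d M r lW lH W' h') :
    (∀ t : Fin d, ∑ k : Fin K, W k t = 0) ∧
      (fun k t => W k t - (1 / (K : ℝ)) * ∑ l : Fin K, W l t) = W :=
  classifier_centering_at_global_min_general r lW lH hlW W h hmin
end

section
/- Fix a multiplicity m ∈ {1,…,K−1} and assume N_m > 0 and N_m^j > 0 for every j ∈ [K]. Then the mean-difference matrix satisfies ‖Θ_m‖_F² ≤ [ 2K/N_m + (2K²/m²) · max_{|S|=m} Σ_{j∈S} 1/N_m^j ] · Σ_{|S|=m} Σ_{i=1}^{r_{m,S}} ‖h_{m,S,i}‖². -/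
open Finset

/-- Global mean `h̄_m = (1/N_m) ∑_{|S|=m} ∑_i h_{m,S,i}`. -/
noncomputable def hbar (K d m : ℕ) (rm : Finset (Fin K) → ℕ)
    (h : Finset (Fin K) → ℕ → Fin d → ℝ) : Fin d → ℝ :=
  fun t => (1 / (groupN K m rm : ℝ)) *
    ∑ S ∈ msets K m, ∑ i ∈ Finset.range (rm S), h S i t

/-- Class-conditional mean `h̄_m^j = (1/N_m) ∑_{|S|=m, j∈S} ∑_i h_{m,S,i}`. -/
noncomputable def hbarClass (K d m : ℕ) (rm : Finset (Fin K) → ℕ)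
    (h : Finset (Fin K) → ℕ → Fin d → ℝ) (j : Fin K) : Fin d → ℝ :=
  fun t => (1 / (groupN K m rm : ℝ)) *
    ∑ S ∈ (msets K m).filter (fun S => j ∈ S), ∑ i ∈ Finset.range (rm S), h S i t

/-- Mean-difference matrix `Θ_m` with `j`-th row `(h̄_m − (K/m) h̄_m^j)ᵀ`. -/
noncomputable def Theta (K d m : ℕ) (rm : Finset (Fin K) → ℕ)
    (h : Finset (Fin K) → ℕ → Fin d → ℝ) : Fin K → Fin d → ℝ :=
  fun j t => hbar K d m rm h t - ((K : ℝ) / m) * hbarClass K d m rm h j t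

/-- Total feature energy `∑_{|S|=m} ∑_i ‖h_{m,S,i}‖²`. -/
noncomputable def energy (K d m : ℕ) (rm : Finset (Fin K) → ℕ)
    (h : Finset (Fin K) → ℕ → Fin d → ℝ) : ℝ :=
  ∑ S ∈ msets K m, ∑ i ∈ Finset.range (rm S), ∑ t, (h S i t) ^ 2

lemma nested_cs {α : Type*} (A : Finset α) (r : α → ℕ) (f : α → ℕ → ℝ) :
    (∑ S ∈ A, ∑ i ∈ Finset.range (r S), f S i)^2
      ≤ (∑ S ∈ A, (r S : ℝ)) * ∑ S ∈ A, ∑ i ∈ Finset.range (r S), (f S i)^2 := by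
  have h1 := sq_sum_le_card_mul_sum_sq (s := A.sigma (fun S => Finset.range (r S)))
    (f := fun p => f p.1 p.2)
  rw [Finset.sum_sigma, Finset.sum_sigma, Finset.card_sigma] at h1
  simpa [Finset.card_range] using h1

/-- Θ–H interface inequality. For a multiplicity `m ∈ {1,…,K−1}`
with `N_m > 0` and `N_m^j > 0` for every `j`:
`‖Θ_m‖_F² ≤ [2K/N_m + (2K²/m²)·max_{|S|=m} ∑_{j∈S} 1/N_m^j]·∑_{S,i}‖h_{m,S,i}‖²`. -/
theorem theta_H_interface_inequality {K d : ℕ} (hK : 2 ≤ K) (hd : 1 ≤ d)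
    (m : ℕ) (hm1 : 1 ≤ m) (hmK : m ≤ K - 1)
    (rm : Finset (Fin K) → ℕ) (hN : 0 < groupN K m rm)
    (hNj : ∀ j : Fin K, 0 < classN K m rm j)
    (h : Finset (Fin K) → ℕ → Fin d → ℝ) :
    ∑ j : Fin K, ∑ t, (Theta K d m rm h j t) ^ 2
      ≤ (2 * K / (groupN K m rm : ℝ)
            + (2 * (K : ℝ) ^ 2 / (m : ℝ) ^ 2) * maxRare K m rm)
          * energy K d m rm h := by

  have hN0 : (0:ℝ) < (groupN K m rm : ℝ) := by exact_mod_cast hN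
  set N : ℝ := (groupN K m rm : ℝ) with hNdef
  have hm0 : (0:ℝ) < (m:ℝ) := by exact_mod_cast hm1
  have hK0 : (0:ℝ) < (K:ℝ) := by positivity
  have hE0 : 0 ≤ energy K d m rm h := by
    unfold energy; positivity
  have hsumr : ∑ S ∈ msets K m, (rm S : ℝ) = N := by
    rw [hNdef]; unfold groupN; push_cast; ring
  -- swap lemma
  have swapE : ∀ A : Finset (Finset (Fin K)),
      ∑ t : Fin d, ∑ S ∈ A, ∑ i ∈ Finset.range (rm S), (h S i t)^2
        = ∑ S ∈ A, ∑ i ∈ Finset.range (rm S), ∑ t, (h S i t)^2 := by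
    intro A
    rw [Finset.sum_comm]
    exact Finset.sum_congr rfl fun S _ => Finset.sum_comm
  -- Step B : global mean bound
  have stepB : ∑ t, (hbar K d m rm h t)^2 ≤ energy K d m rm h / N := by
    have key : ∀ t : Fin d,
        (∑ S ∈ msets K m, ∑ i ∈ Finset.range (rm S), h S i t)^2
          ≤ N * ∑ S ∈ msets K m, ∑ i ∈ Finset.range (rm S), (h S i t)^2 := by
      intro t
      have := nested_cs (msets K m) rm (fun S i => h S i t)
      rwa [hsumr] at this
    have h1 : ∑ t, (hbar K d m rm h t)^2
        ≤ ∑ t, (1/N)^2 * (N * ∑ S ∈ msets K m, ∑ i ∈ Finset.range (rm S), (h S i t)^2) := by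
      apply Finset.sum_le_sum
      intro t _
      unfold hbar
      rw [mul_pow]
      exact mul_le_mul_of_nonneg_left (key t) (by positivity)
    calc ∑ t, (hbar K d m rm h t)^2
        ≤ ∑ t, (1/N)^2 * (N * ∑ S ∈ msets K m, ∑ i ∈ Finset.range (rm S), (h S i t)^2) := h1
      _ = (1/N) * ∑ t : Fin d, ∑ S ∈ msets K m, ∑ i ∈ Finset.range (rm S), (h S i t)^2 := by
          rw [← Finset.mul_sum, ← Finset.mul_sum]
          field_simp
      _ = energy K d m rm h / N := by
          rw [swapE]
          unfold energy
          field_simp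
  -- Step C : class mean bound
  have stepC : ∑ j : Fin K, ∑ t, (hbarClass K d m rm h j t)^2
      ≤ (m : ℝ) * energy K d m rm h / N := by
    have keyj : ∀ j : Fin K, ∑ t, (hbarClass K d m rm h j t)^2
        ≤ (1/N) * ∑ S ∈ (msets K m).filter (fun S => j ∈ S),
            ∑ i ∈ Finset.range (rm S), ∑ t, (h S i t)^2 := by
      intro j
      have hle : ∑ S ∈ (msets K m).filter (fun S => j ∈ S), (rm S : ℝ) ≤ N := by
        rw [← hsumr]
        apply Finset.sum_le_sum_of_subset_of_nonneg (Finset.filter_subset _ _)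
        intro i _ _; positivity
      have key : ∀ t : Fin d,
          (∑ S ∈ (msets K m).filter (fun S => j ∈ S), ∑ i ∈ Finset.range (rm S), h S i t)^2
            ≤ N * ∑ S ∈ (msets K m).filter (fun S => j ∈ S),
                ∑ i ∈ Finset.range (rm S), (h S i t)^2 := by
        intro t
        refine le_trans (nested_cs _ rm (fun S i => h S i t)) ?_
        apply mul_le_mul_of_nonneg_right hle
        positivity
      have h1 : ∑ t, (hbarClass K d m rm h j t)^2
          ≤ ∑ t, (1/N)^2 * (N * ∑ S ∈ (msets K m).filter (fun S => j ∈ S),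
              ∑ i ∈ Finset.range (rm S), (h S i t)^2) := by
        apply Finset.sum_le_sum
        intro t _
        unfold hbarClass
        rw [mul_pow]
        exact mul_le_mul_of_nonneg_left (key t) (by positivity)
      refine h1.trans (le_of_eq ?_)
      rw [← Finset.mul_sum, ← Finset.mul_sum, ← swapE]
      field_simp
    have h2 : ∑ j : Fin K, ∑ t, (hbarClass K d m rm h j t)^2
        ≤ ∑ j : Fin K, (1/N) * ∑ S ∈ (msets K m).filter (fun S => j ∈ S),
            ∑ i ∈ Finset.range (rm S), ∑ t, (h S i t)^2 :=
      Finset.sum_le_sum fun j _ => keyj j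
    refine h2.trans (le_of_eq ?_)
    rw [← Finset.mul_sum]
    have hswap : ∑ j : Fin K, ∑ S ∈ (msets K m).filter (fun S => j ∈ S),
        ∑ i ∈ Finset.range (rm S), ∑ t, (h S i t)^2
        = (m : ℝ) * energy K d m rm h := by
      have : ∀ j : Fin K, ∑ S ∈ (msets K m).filter (fun S => j ∈ S),
          ∑ i ∈ Finset.range (rm S), ∑ t, (h S i t)^2
          = ∑ S ∈ msets K m, if j ∈ S then ∑ i ∈ Finset.range (rm S), ∑ t, (h S i t)^2 else 0 := by
        intro j; rw [Finset.sum_filter]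
      simp_rw [this]
      rw [Finset.sum_comm]
      unfold energy
      rw [Finset.mul_sum]
      apply Finset.sum_congr rfl
      intro S hS
      have hcard : S.card = m := (Finset.mem_powersetCard.mp hS).2
      rw [Finset.sum_ite_mem, Finset.univ_inter, Finset.sum_const, hcard]
      simp [mul_comm]
    rw [hswap]
    ring
  -- Step D : pointwise triangle-type bound
  have stepD : ∑ j : Fin K, ∑ t, (Theta K d m rm h j t)^2
      ≤ 2 * K * (∑ t, (hbar K d m rm h t)^2)
        + 2 * ((K:ℝ)/m)^2 * ∑ j : Fin K, ∑ t, (hbarClass K d m rm h j t)^2 := by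
    have hpt : ∀ (j : Fin K) (t : Fin d), (Theta K d m rm h j t)^2
        ≤ 2 * (hbar K d m rm h t)^2 + 2 * ((K:ℝ)/m)^2 * (hbarClass K d m rm h j t)^2 := by
      intro j t
      unfold Theta
      nlinarith [sq_nonneg (hbar K d m rm h t + (K:ℝ)/m * hbarClass K d m rm h j t),
        sq_nonneg (hbar K d m rm h t - (K:ℝ)/m * hbarClass K d m rm h j t)]
    calc ∑ j : Fin K, ∑ t, (Theta K d m rm h j t)^2
        ≤ ∑ j : Fin K, ∑ t, (2 * (hbar K d m rm h t)^2
            + 2 * ((K:ℝ)/m)^2 * (hbarClass K d m rm h j t)^2) :=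
          Finset.sum_le_sum fun j _ => Finset.sum_le_sum fun t _ => hpt j t
      _ = 2 * K * (∑ t, (hbar K d m rm h t)^2)
            + 2 * ((K:ℝ)/m)^2 * ∑ j : Fin K, ∑ t, (hbarClass K d m rm h j t)^2 := by
          have e1 : ∀ j : Fin K, ∑ t, (2 * (hbar K d m rm h t)^2
              + 2 * ((K:ℝ)/m)^2 * (hbarClass K d m rm h j t)^2)
              = 2 * (∑ t, (hbar K d m rm h t)^2)
                + 2 * ((K:ℝ)/m)^2 * ∑ t, (hbarClass K d m rm h j t)^2 := fun j => by
            rw [Finset.sum_add_distrib, ← Finset.mul_sum, ← Finset.mul_sum]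
          simp_rw [e1]
          rw [Finset.sum_add_distrib, Finset.sum_const, Finset.card_univ, Fintype.card_fin,
            nsmul_eq_mul, ← Finset.mul_sum]
          ring
  -- Step E : maxRare lower bound
  have stepE : (m : ℝ) / N ≤ maxRare K m rm := by
    obtain ⟨S0, hS0sub, hS0card⟩ := Finset.exists_subset_card_eq
      (s := (Finset.univ : Finset (Fin K))) (n := m)
      (by simpa using le_trans hmK (Nat.sub_le K 1))
    have hS0 : S0 ∈ msets K m := Finset.mem_powersetCard.mpr ⟨hS0sub, hS0card⟩
    have hmem : (∑ j ∈ S0, (1:ℝ) / (classN K m rm j)) ∈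
        ((fun S => ∑ j ∈ S, (1 : ℝ) / (classN K m rm j)) '' ↑(msets K m)) :=
      ⟨S0, by simpa using hS0, rfl⟩
    have hbdd : BddAbove ((fun S => ∑ j ∈ S, (1 : ℝ) / (classN K m rm j)) '' ↑(msets K m)) :=
      (((msets K m).finite_toSet).image _).bddAbove
    refine le_trans ?_ (le_csSup hbdd hmem)
    have hterm : ∀ j ∈ S0, (1:ℝ)/N ≤ 1 / (classN K m rm j) := by
      intro j _
      apply one_div_le_one_div_of_le
      · exact_mod_cast hNj j
      · rw [hNdef]
        have : classN K m rm j ≤ groupN K m rm := by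
          unfold classN groupN
          exact Finset.sum_le_sum_of_subset (Finset.filter_subset _ _)
        exact_mod_cast this
    calc (m : ℝ) / N = ∑ _j ∈ S0, (1:ℝ)/N := by
          rw [Finset.sum_const, hS0card]; simp [div_eq_mul_inv, mul_comm]
      _ ≤ ∑ j ∈ S0, (1:ℝ) / (classN K m rm j) := Finset.sum_le_sum hterm
  -- Combine
  have combine : 2 * K * (∑ t, (hbar K d m rm h t)^2)
        + 2 * ((K:ℝ)/m)^2 * ∑ j : Fin K, ∑ t, (hbarClass K d m rm h j t)^2
      ≤ (2 * K / N + (2 * (K : ℝ) ^ 2 / (m : ℝ) ^ 2) * maxRare K m rm)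
          * energy K d m rm h := by
    have c1 : 2 * K * (∑ t, (hbar K d m rm h t)^2) ≤ 2 * K / N * energy K d m rm h := by
      have := mul_le_mul_of_nonneg_left stepB (by positivity : (0:ℝ) ≤ 2 * K)
      calc 2 * K * (∑ t, (hbar K d m rm h t)^2) ≤ 2 * K * (energy K d m rm h / N) := this
        _ = 2 * K / N * energy K d m rm h := by ring
    have c2 : 2 * ((K:ℝ)/m)^2 * ∑ j : Fin K, ∑ t, (hbarClass K d m rm h j t)^2
        ≤ (2 * (K : ℝ) ^ 2 / (m : ℝ) ^ 2) * maxRare K m rm * energy K d m rm h := by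
      have h1 : 2 * ((K:ℝ)/m)^2 * ∑ j : Fin K, ∑ t, (hbarClass K d m rm h j t)^2
          ≤ 2 * ((K:ℝ)/m)^2 * ((m : ℝ) * energy K d m rm h / N) :=
        mul_le_mul_of_nonneg_left stepC (by positivity)
      refine h1.trans ?_
      have h2 : (2 * (K : ℝ) ^ 2 / (m : ℝ) ^ 2) * ((m:ℝ)/N) * energy K d m rm h
          ≤ (2 * (K : ℝ) ^ 2 / (m : ℝ) ^ 2) * maxRare K m rm * energy K d m rm h := by
        apply mul_le_mul_of_nonneg_right _ hE0
        exact mul_le_mul_of_nonneg_left stepE (by positivity)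
      refine le_trans (le_of_eq ?_) h2
      field_simp
    calc 2 * K * (∑ t, (hbar K d m rm h t)^2)
          + 2 * ((K:ℝ)/m)^2 * ∑ j : Fin K, ∑ t, (hbarClass K d m rm h j t)^2
        ≤ 2 * K / N * energy K d m rm h
          + (2 * (K : ℝ) ^ 2 / (m : ℝ) ^ 2) * maxRare K m rm * energy K d m rm h :=
          add_le_add c1 c2
      _ = (2 * K / N + (2 * (K : ℝ) ^ 2 / (m : ℝ) ^ 2) * maxRare K m rm)
          * energy K d m rm h := by ring
  exact stepD.trans combine
end

section
/- Let g : ℝ^{K×n} → ℝ be differentiable, λ_W, λ_H > 0, and define f(W,H) = g(WH) + (λ_W/2)‖W‖_F² + (λ_H/2)‖H‖_F² for W ∈ ℝ^{K×d} and H ∈ ℝ^{d×n}. Then every critical point (W,H) of f (i.e., a point where the gradient of f vanishes) satisfies W⊤W = (λ_H/λ_W) H H⊤, and in particular λ_W ‖W‖_F² = λ_H ‖H‖_F². -/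
/-!
Perturb a critical point `(W, H)` along the line `(W + sU, H + sV)` with `WV + UH = 0`. The
product then moves only to second order, `(W + sU)(H + sV) = WH + s²UV`, so the data term
`g` has zero derivative along the line, and criticality says the derivative of the
regularizer vanishes: `λ_W ⟨W, U⟩ + λ_H ⟨H, V⟩ = 0`. The choice `U = W E`, `V = -E H` with
`E` a matrix unit reads off the entries of `λ_W WᵀW = λ_H HHᵀ`.
-/

section FactoredLoss

variable {ι κ μ : Type*} [Fintype κ]

theorem sum_mul_line_of_balanced {W U : ι → κ → ℝ} {H V : κ → μ → ℝ}
    (hUV : ∀ k j, ∑ t, (W k t * V t j + U k t * H t j) = 0) (s : ℝ) :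
    (fun k j => ∑ t, (W k t + s * U k t) * (H t j + s * V t j))
      = (fun k j => ∑ t, W k t * H t j) + s ^ 2 • fun k j => ∑ t, U k t * V t j := by
  funext k j
  have h := hUV k j
  simp only [Pi.add_apply, Pi.smul_apply, smul_eq_mul, Finset.mul_sum,
    ← Finset.sum_add_distrib] at h ⊢
  rw [← sub_eq_zero, ← Finset.sum_sub_distrib, ← mul_eq_zero_of_right s h, Finset.mul_sum]
  exact Finset.sum_congr rfl fun t _ => by ring

variable [Fintype ι] [Fintype μ]

noncomputable def factoredLoss (g : (ι → μ → ℝ) → ℝ) (lW lH : ℝ)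
    (p : (ι → κ → ℝ) × (κ → μ → ℝ)) : ℝ :=
  g (fun k j => ∑ t, p.1 k t * p.2 t j)
    + lW / 2 * ∑ k, ∑ t, (p.1 k t) ^ 2
    + lH / 2 * ∑ t, ∑ j, (p.2 t j) ^ 2

theorem hasDerivAt_sum_sum_sq_line (x v : ι → κ → ℝ) :
    HasDerivAt (fun s : ℝ => ∑ i, ∑ j, (x i j + s * v i j) ^ 2)
      (2 * ∑ i, ∑ j, x i j * v i j) 0 := by
  simp only [Finset.mul_sum]
  refine HasDerivAt.fun_sum fun i _ => HasDerivAt.fun_sum fun j _ => ?_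
  have h := (((hasDerivAt_id' (0 : ℝ)).mul_const (v i j)).const_add (x i j)).fun_pow 2
  exact h.congr_deriv <| by
    simp only [zero_mul, add_zero, Nat.add_one_sub_one, pow_one, one_mul]; ring

theorem hasDerivAt_comp_add_sq_smul {E F : Type*} [NormedAddCommGroup E] [NormedSpace ℝ E]
    [NormedAddCommGroup F] [NormedSpace ℝ F] {g : E → F} {x : E}
    (hg : DifferentiableAt ℝ g x) (v : E) :
    HasDerivAt (fun s : ℝ => g (x + s ^ 2 • v)) 0 0 := by
  have hline : HasDerivAt (fun s : ℝ => x + s ^ 2 • v) 0 0 := by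
    simpa using ((hasDerivAt_pow 2 (0 : ℝ)).smul_const v).const_add x
  simpa [Function.comp_def] using hg.hasFDerivAt.comp_hasDerivAt_of_eq 0 hline (by simp)

theorem hasDerivAt_factoredLoss_line_of_balanced {g : (ι → μ → ℝ) → ℝ} {W U : ι → κ → ℝ}
    {H V : κ → μ → ℝ} (hg : DifferentiableAt ℝ g (fun k j => ∑ t, W k t * H t j))
    (hUV : ∀ k j, ∑ t, (W k t * V t j + U k t * H t j) = 0) (lW lH : ℝ) :
    HasDerivAt (fun s : ℝ => factoredLoss g lW lH
        (fun k t => W k t + s * U k t, fun t j => H t j + s * V t j))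
      (lW * ∑ k, ∑ t, W k t * U k t + lH * ∑ t, ∑ j, H t j * V t j) 0 := by
  have hdata := hasDerivAt_comp_add_sq_smul hg fun k j => ∑ t, U k t * V t j
  simp only [← sum_mul_line_of_balanced hUV] at hdata
  exact ((hdata.add ((hasDerivAt_sum_sum_sq_line W U).const_mul (lW / 2))).add
    ((hasDerivAt_sum_sum_sq_line H V).const_mul (lH / 2))).congr_deriv (by ring)

theorem differentiableAt_factoredLoss {g : (ι → μ → ℝ) → ℝ} {W : ι → κ → ℝ}
    {H : κ → μ → ℝ} (hg : DifferentiableAt ℝ g (fun k j => ∑ t, W k t * H t j)) (lW lH : ℝ) :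
    DifferentiableAt ℝ (factoredLoss g lW lH) (W, H) := by
  unfold factoredLoss
  fun_prop

theorem regularizer_balance_of_fderiv_eq_zero {g : (ι → μ → ℝ) → ℝ} {lW lH : ℝ}
    {W U : ι → κ → ℝ} {H V : κ → μ → ℝ}
    (hg : DifferentiableAt ℝ g (fun k j => ∑ t, W k t * H t j))
    (hcrit : fderiv ℝ (factoredLoss g lW lH) (W, H) = 0)
    (hUV : ∀ k j, ∑ t, (W k t * V t j + U k t * H t j) = 0) :
    lW * ∑ k, ∑ t, W k t * U k t + lH * ∑ t, ∑ j, H t j * V t j = 0 := by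
  have hF : HasFDerivAt (factoredLoss g lW lH) 0 (W, H) :=
    hcrit ▸ (differentiableAt_factoredLoss hg lW lH).hasFDerivAt
  have hline : HasDerivAt (fun s : ℝ => (fun k t => W k t + s * U k t,
      fun t j => H t j + s * V t j)) (U, V) 0 := by
    refine .prodMk (hasDerivAt_pi.mpr fun k => hasDerivAt_pi.mpr fun t => ?_)
      (hasDerivAt_pi.mpr fun t => hasDerivAt_pi.mpr fun j => ?_)
    · simpa using ((hasDerivAt_id' (0 : ℝ)).mul_const (U k t)).const_add (W k t)
    · simpa using ((hasDerivAt_id' (0 : ℝ)).mul_const (V t j)).const_add (H t j)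
  refine (hasDerivAt_factoredLoss_line_of_balanced hg hUV lW lH).unique ?_
  simpa [Function.comp_def] using hF.comp_hasDerivAt_of_eq 0 hline (by simp)

theorem gram_balance_of_fderiv_eq_zero {g : (ι → μ → ℝ) → ℝ} {lW lH : ℝ}
    {W : ι → κ → ℝ} {H : κ → μ → ℝ}
    (hg : DifferentiableAt ℝ g (fun k j => ∑ t, W k t * H t j))
    (hcrit : fderiv ℝ (factoredLoss g lW lH) (W, H) = 0) (t t' : κ) :
    lW * ∑ k, W k t * W k t' = lH * ∑ j, H t j * H t' j := by
  classical
  have h := regularizer_balance_of_fderiv_eq_zero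
    (U := fun k s => if s = t' then W k t else 0) (V := fun s j => if s = t then -H t' j else 0)
    hg hcrit fun k j => by simp [mul_ite, ite_mul, Finset.sum_add_distrib]
  simp only [mul_ite, mul_zero, mul_neg, Finset.sum_ite_irrel, Finset.sum_const_zero,
    Finset.sum_ite_eq', Finset.mem_univ, if_true, Finset.sum_neg_distrib] at h
  simp only [mul_comm (W _ t')] at h
  linarith

end FactoredLoss

theorem critical_point_scaling_identity_general {K d n : ℕ}
    (g : (Fin K → Fin n → ℝ) → ℝ) (hg : Differentiable ℝ g)
    (lW lH : ℝ) (hlW : 0 < lW)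
    (W : Fin K → Fin d → ℝ) (H : Fin d → Fin n → ℝ)
    (hcrit : fderiv ℝ (fun p : (Fin K → Fin d → ℝ) × (Fin d → Fin n → ℝ) =>
      g (fun k j => ∑ t, p.1 k t * p.2 t j)
        + lW / 2 * ∑ k, ∑ t, (p.1 k t) ^ 2
        + lH / 2 * ∑ t, ∑ j, (p.2 t j) ^ 2) (W, H) = 0) :
    (∀ t t' : Fin d, ∑ k : Fin K, W k t * W k t'
        = (lH / lW) * ∑ j : Fin n, H t j * H t' j) ∧
      lW * (∑ k, ∑ t, (W k t) ^ 2) = lH * (∑ t, ∑ j, (H t j) ^ 2) := by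
  have hbal := gram_balance_of_fderiv_eq_zero (hg _) hcrit
  refine ⟨fun t t' => by rw [div_mul_eq_mul_div, eq_div_iff hlW.ne', mul_comm, hbal], ?_⟩
  calc lW * ∑ k, ∑ t, W k t ^ 2 = ∑ t, lW * ∑ k, W k t * W k t := by
        simp only [Finset.mul_sum, sq]; exact Finset.sum_comm
    _ = ∑ t, lH * ∑ j, H t j * H t j := Finset.sum_congr rfl fun t _ => hbal t t
    _ = lH * ∑ t, ∑ j, H t j ^ 2 := by simp only [Finset.mul_sum, sq]

/-- critical-point scaling identity. Let `g : ℝ^{K×n} → ℝ` be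
differentiable, `λ_W, λ_H > 0`, and
`f(W,H) = g(WH) + (λ_W/2)‖W‖_F² + (λ_H/2)‖H‖_F²`. Then every critical point `(W,H)`
of `f` satisfies `WᵀW = (λ_H/λ_W) HHᵀ`; in particular `λ_W‖W‖_F² = λ_H‖H‖_F²`. -/
theorem critical_point_scaling_identity {K d n : ℕ} (hK : 1 ≤ K) (hd : 1 ≤ d)
    (hn : 1 ≤ n)
    (g : (Fin K → Fin n → ℝ) → ℝ) (hg : Differentiable ℝ g)
    (lW lH : ℝ) (hlW : 0 < lW) (hlH : 0 < lH)
    (W : Fin K → Fin d → ℝ) (H : Fin d → Fin n → ℝ)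
    (hcrit : fderiv ℝ (fun p : (Fin K → Fin d → ℝ) × (Fin d → Fin n → ℝ) =>
      g (fun k j => ∑ t, p.1 k t * p.2 t j)
        + lW / 2 * ∑ k, ∑ t, (p.1 k t) ^ 2
        + lH / 2 * ∑ t, ∑ j, (p.2 t j) ^ 2) (W, H) = 0) :
    (∀ t t' : Fin d, ∑ k : Fin K, W k t * W k t'
        = (lH / lW) * ∑ j : Fin n, H t j * H t' j) ∧
      lW * (∑ k, ∑ t, (W k t) ^ 2) = lH * (∑ t, ∑ j, (H t j) ^ 2) :=
  critical_point_scaling_identity_general g hg lW lH hlW W H hcrit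
end

section
/- Let S ⊆ [K] with |S| = m, where 1 ≤ m < K, and fix c₁ > 0 with c₂ defined as c₂ = (c₁m/(c₁+1))·log(m) + (m c₁/(1+c₁))·log((c₁+1)/c₁) + (m/(c₁+1))·log((K−m)(c₁+1)). Then equality L_PAL(z, S) = (1/(1+c₁))·(m/(K−m))·⟨1 − (K/m) 1_S, z⟩ + c₂ holds for z ∈ ℝ^K if and only if all of the following hold: (i) z_i = z_j for all i, j ∈ S (common value z_in); (ii) z_i = z_j for all i, j ∉ S (common value z_out); (iii) z_in − z_out = log( ((K−m)/m) c₁ ). -/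
open Finset

/-- tightness of the affine PAL lower bound. For `S ⊆ [K]` with
`|S| = m`, `1 ≤ m < K`, and `c₁ > 0`: equality
`L_PAL(z,S) = (1/(1+c₁))·(m/(K−m))·⟨1 − (K/m)1_S, z⟩ + c₂` holds iff
(i) `z` is constant on `S` (value `z_in`), (ii) `z` is constant off `S`
(value `z_out`), and (iii) `z_in − z_out = log(((K−m)/m)·c₁)`. -/
theorem pal_affine_lower_bound_tightness {K : ℕ} (hK : 2 ≤ K) (m : ℕ) (hm1 : 1 ≤ m)
    (hmK : m < K) (S : Finset (Fin K)) (hS : S.card = m)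
    (c1 : ℝ) (hc1 : 0 < c1) (z : Fin K → ℝ) :
    (palLoss z S
        = (1 / (1 + c1)) * ((m : ℝ) / ((K : ℝ) - m)) *
            (∑ k : Fin K, (1 - ((K : ℝ) / m) * (if k ∈ S then 1 else 0)) * z k)
          + ((c1 * m / (c1 + 1)) * Real.log m
              + ((m : ℝ) * c1 / (1 + c1)) * Real.log ((c1 + 1) / c1)
              + ((m : ℝ) / (c1 + 1)) * Real.log (((K : ℝ) - m) * (c1 + 1))))
      ↔ ∃ zin zout : ℝ,
          (∀ i ∈ S, z i = zin) ∧ (∀ j : Fin K, j ∉ S → z j = zout) ∧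
            zin - zout = Real.log ((((K : ℝ) - m) / m) * c1) := by
  have hm0 : (0:ℝ) < m := by exact_mod_cast hm1
  have hKm0 : (0:ℝ) < (K:ℝ) - m := by
    have : (m:ℝ) < K := by exact_mod_cast hmK
    linarith
  have h1c : (0:ℝ) < c1 + 1 := by linarith
  set α : ℝ := c1 / ((c1 + 1) * m) with hα
  set β : ℝ := 1 / ((c1 + 1) * ((K:ℝ) - m)) with hβ
  have hα0 : 0 < α := by positivity
  have hβ0 : 0 < β := by positivity
  set w : Fin K → ℝ := fun j => if j ∈ S then α else β with hw
  set x : Fin K → ℝ := fun j => Real.exp (z j) / w j with hx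
  have hw0 : ∀ j, 0 < w j := by
    intro j; simp only [hw]; split <;> assumption
  have hx0 : ∀ j, 0 < x j := by
    intro j; exact div_pos (Real.exp_pos _) (hw0 j)
  set T : ℝ := ∑ j, Real.exp (z j) with hT
  have hT0 : 0 < T :=
    Finset.sum_pos (fun j _ => Real.exp_pos _) (univ_nonempty_iff.2 ⟨⟨0, by omega⟩⟩)
  have hcardc : (Sᶜ.card : ℝ) = (K:ℝ) - m := by
    rw [Finset.card_compl, hS]
    simp [Nat.cast_sub hmK.le]
  -- palLoss as m log T - A
  set A : ℝ := ∑ k ∈ S, z k with hA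
  set B : ℝ := ∑ k ∈ Sᶜ, z k with hB
  have hpal : palLoss z S = (m:ℝ) * Real.log T - A := by
    unfold palLoss softmax
    rw [show ∑ k ∈ S, -Real.log (Real.exp (z k) / ∑ j, Real.exp (z j))
        = ∑ k ∈ S, (Real.log T - z k) by
      refine Finset.sum_congr rfl fun k _ => ?_
      rw [Real.log_div (Real.exp_ne_zero _) hT0.ne', Real.log_exp]; ring]
    rw [Finset.sum_sub_distrib, Finset.sum_const, hS, hA, nsmul_eq_mul]
  -- inner product term
  have hinner : (∑ k : Fin K, (1 - ((K : ℝ) / m) * (if k ∈ S then 1 else 0)) * z k)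
      = (A + B) - ((K:ℝ)/m) * A := by
    have h1 : ∀ k : Fin K, (1 - ((K : ℝ) / m) * (if k ∈ S then 1 else 0)) * z k
        = z k - ((K:ℝ)/m) * (if k ∈ S then z k else 0) := by
      intro k; split <;> ring
    rw [Finset.sum_congr rfl fun k _ => h1 k, Finset.sum_sub_distrib, ← Finset.mul_sum]
    have h2 : ∑ k : Fin K, (if k ∈ S then z k else 0) = A := by
      rw [Finset.sum_ite_mem, Finset.univ_inter, hA]
    have h3 : ∑ k : Fin K, z k = A + B := by
      rw [hA, hB, Finset.sum_add_sum_compl]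
    rw [h2, h3]
  -- the weighted log sum
  have hwlog : ∑ j, w j * Real.log (x j)
      = α * A - (m:ℝ) * α * Real.log α + (β * B - ((K:ℝ) - m) * β * Real.log β) := by
    rw [← Finset.sum_add_sum_compl S]
    congr 1
    · rw [show ∑ j ∈ S, w j * Real.log (x j) = ∑ j ∈ S, (α * z j - α * Real.log α) by
        refine Finset.sum_congr rfl fun j hj => ?_
        simp only [hx, hw, if_pos hj]
        rw [Real.log_div (Real.exp_ne_zero _) hα0.ne', Real.log_exp]; ring]
      rw [Finset.sum_sub_distrib, ← Finset.mul_sum, Finset.sum_const, hS, ← hA, nsmul_eq_mul]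
      ring
    · rw [show ∑ j ∈ Sᶜ, w j * Real.log (x j) = ∑ j ∈ Sᶜ, (β * z j - β * Real.log β) by
        refine Finset.sum_congr rfl fun j hj => ?_
        have hj' : j ∉ S := Finset.mem_compl.1 hj
        simp only [hx, hw, if_neg hj']
        rw [Real.log_div (Real.exp_ne_zero _) hβ0.ne', Real.log_exp]; ring]
      rw [Finset.sum_sub_distrib, ← Finset.mul_sum, Finset.sum_const, nsmul_eq_mul, hcardc, ← hB]
      ring
  have hlogα : Real.log α = -(Real.log m + Real.log ((c1 + 1) / c1)) := by
    rw [hα, Real.log_div hc1.ne' (by positivity), Real.log_mul h1c.ne' hm0.ne',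
      Real.log_div h1c.ne' hc1.ne']
    ring
  have hlogβ : Real.log β = -(Real.log (((K:ℝ) - m) * (c1 + 1))) := by
    rw [hβ, one_div, Real.log_inv, Real.log_mul h1c.ne' hKm0.ne', Real.log_mul hKm0.ne' h1c.ne']
    ring
  -- RHS of equality as m * weighted log sum - A
  have hrhs : (1 / (1 + c1)) * ((m : ℝ) / ((K : ℝ) - m)) *
            (∑ k : Fin K, (1 - ((K : ℝ) / m) * (if k ∈ S then 1 else 0)) * z k)
          + ((c1 * m / (c1 + 1)) * Real.log m
              + ((m : ℝ) * c1 / (1 + c1)) * Real.log ((c1 + 1) / c1)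
              + ((m : ℝ) / (c1 + 1)) * Real.log (((K : ℝ) - m) * (c1 + 1)))
      = (m:ℝ) * (∑ j, w j * Real.log (x j)) - A := by
    rw [hinner, hwlog, hlogα, hlogβ, hα, hβ]
    field_simp
    ring
  -- sum of weights is 1
  have hw1 : ∑ j, w j = 1 := by
    rw [← Finset.sum_add_sum_compl S, Finset.sum_congr rfl (fun j hj => if_pos hj),
      Finset.sum_congr rfl (fun j (hj : j ∈ Sᶜ) => if_neg (Finset.mem_compl.1 hj)),
      Finset.sum_const, Finset.sum_const, hS, nsmul_eq_mul, nsmul_eq_mul, hcardc, hα, hβ]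
    field_simp
  have hsum : ∑ j, w j * x j = T := by
    rw [hT]
    refine Finset.sum_congr rfl fun j _ => ?_
    simp only [hx]
    rw [mul_comm, div_mul_cancel₀ _ (hw0 j).ne']
  -- Jensen equality case
  have hjensen : (Real.log T = ∑ j, w j * Real.log (x j)) ↔ ∀ j, x j = T := by
    have := strictConcaveOn_log_Ioi.map_sum_eq_iff (t := Finset.univ) (w := w) (p := x)
      (fun j _ => hw0 j) hw1 (fun j _ => hx0 j)
    simp only [smul_eq_mul] at this
    rw [hsum] at this
    constructor
    · intro h j; exact this.1 h j (Finset.mem_univ j)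
    · intro h; exact this.2 fun j _ => h j
  have hmain : (palLoss z S
        = (1 / (1 + c1)) * ((m : ℝ) / ((K : ℝ) - m)) *
            (∑ k : Fin K, (1 - ((K : ℝ) / m) * (if k ∈ S then 1 else 0)) * z k)
          + ((c1 * m / (c1 + 1)) * Real.log m
              + ((m : ℝ) * c1 / (1 + c1)) * Real.log ((c1 + 1) / c1)
              + ((m : ℝ) / (c1 + 1)) * Real.log (((K : ℝ) - m) * (c1 + 1))))
      ↔ ∀ j, x j = T := by
    rw [hpal, hrhs, ← hjensen]
    constructor
    · intro h
      have := sub_left_inj.1 h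
      exact mul_left_cancel₀ hm0.ne' this
    · intro h; rw [h]
  rw [hmain]
  constructor
  · intro h
    refine ⟨Real.log (T * α), Real.log (T * β), ?_, ?_, ?_⟩
    · intro i hi
      have hx' : x i = T := h i
      simp only [hx, hw, if_pos hi] at hx'
      have : Real.exp (z i) = T * α := by
        field_simp at hx' ⊢
        linarith [hx']
      rw [← Real.log_exp (z i), this]
    · intro j hj
      have hx' : x j = T := h j
      simp only [hx, hw, if_neg hj] at hx'
      have : Real.exp (z j) = T * β := by
        field_simp at hx' ⊢
        linarith [hx']
      rw [← Real.log_exp (z j), this]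
    · rw [← Real.log_div (by positivity) (by positivity)]
      congr 1
      rw [hα, hβ]
      field_simp
  · rintro ⟨zin, zout, hin, hout, hgap⟩
    have hexp : Real.exp zin = (((K:ℝ) - m) / m * c1) * Real.exp zout := by
      have h1 : Real.exp (zin - zout) = ((K:ℝ) - m) / m * c1 := by
        rw [hgap, Real.exp_log (by positivity)]
      calc Real.exp zin = Real.exp (zin - zout) * Real.exp zout := by
            rw [← Real.exp_add]; ring_nf
        _ = (((K:ℝ) - m) / m * c1) * Real.exp zout := by rw [h1]
    have hTval : T = (m:ℝ) * Real.exp zin + ((K:ℝ) - m) * Real.exp zout := by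
      rw [hT, ← Finset.sum_add_sum_compl S,
        Finset.sum_congr rfl (fun j hj => by rw [hin j hj]),
        Finset.sum_congr rfl (fun j (hj : j ∈ Sᶜ) => by rw [hout j (Finset.mem_compl.1 hj)]),
        Finset.sum_const, Finset.sum_const, hS, nsmul_eq_mul, nsmul_eq_mul, hcardc]
    intro j
    simp only [hx, hw]
    by_cases hj : j ∈ S
    · rw [if_pos hj, hin j hj, hTval, hexp, hα]
      field_simp
    · rw [if_neg hj, hout j hj, hTval, hexp, hβ]
      field_simp
end

section
/- Fix a multiplicity m ∈ {1,…,K−1} and assume N_m > 0 and N_m^j > 0 for every j ∈ [K]. Then the class-conditional means satisfy Σ_{j=1}^K ‖h̄_m^j‖² ≤ ( max_{|S|=m} Σ_{j∈S} 1/N_m^j ) · Σ_{|S|=m} Σ_{i=1}^{r_{m,S}} ‖h_{m,S,i}‖². -/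
open Finset

/-- For multiplicity `m ∈ {1,…,K−1}` with `N_m > 0` and
`N_m^j > 0` for every `j`: the class-conditional means satisfy
`∑_{j=1}^K ‖h̄_m^j‖² ≤ (max_{|S|=m} ∑_{j∈S} 1/N_m^j)·∑_{S,i}‖h_{m,S,i}‖²`. -/
theorem class_conditional_means_energy_bound {K d : ℕ} (hK : 2 ≤ K) (hd : 1 ≤ d)
    (m : ℕ) (hm1 : 1 ≤ m) (hmK : m ≤ K - 1)
    (rm : Finset (Fin K) → ℕ) (hN : 0 < groupN K m rm)
    (hNj : ∀ j : Fin K, 0 < classN K m rm j)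
    (h : Finset (Fin K) → ℕ → Fin d → ℝ) :
    ∑ j : Fin K, ∑ t, (hbarClass K d m rm h j t) ^ 2
      ≤ maxRare K m rm * energy K d m rm h := by
  have hNr : (0:ℝ) < (groupN K m rm : ℝ) := by exact_mod_cast hN
  have hmsets_ne : (msets K m).Nonempty := by
    obtain ⟨S, hS⟩ := Finset.exists_subset_card_eq (show m ≤ (Finset.univ : Finset (Fin K)).card by
      simpa [Finset.card_univ] using le_trans hmK (Nat.sub_le K 1))
    exact ⟨S, Finset.mem_powersetCard.2 ⟨hS.1, hS.2⟩⟩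
  -- each class count is at most the group count
  have hle : ∀ j : Fin K, classN K m rm j ≤ groupN K m rm := fun j =>
    Finset.sum_le_sum_of_subset (Finset.filter_subset _ _)
  -- maxRare ≥ m / N
  have hbdd : BddAbove ((fun S => ∑ j ∈ S, (1 : ℝ) / (classN K m rm j)) '' ↑(msets K m)) :=
    (((msets K m) : Set (Finset (Fin K))).toFinite.image _).bddAbove
  obtain ⟨S₀, hS₀⟩ := hmsets_ne
  have hS₀card : S₀.card = m := (Finset.mem_powersetCard.1 hS₀).2
  have hmax : (m : ℝ) / (groupN K m rm : ℝ) ≤ maxRare K m rm := by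
    have h1 : (m : ℝ) / (groupN K m rm : ℝ) ≤ ∑ j ∈ S₀, (1 : ℝ) / (classN K m rm j) := by
      have : ∑ j ∈ S₀, (1 : ℝ) / (groupN K m rm : ℝ) ≤ ∑ j ∈ S₀, (1 : ℝ) / (classN K m rm j) := by
        refine Finset.sum_le_sum fun j _ => ?_
        have hjr : (0:ℝ) < (classN K m rm j : ℝ) := by exact_mod_cast hNj j
        exact one_div_le_one_div_of_le hjr (by exact_mod_cast hle j)
      simpa [Finset.sum_const, hS₀card, div_eq_mul_inv, mul_comm] using this
    exact h1.trans (le_csSup hbdd ⟨S₀, hS₀, rfl⟩)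
  -- pointwise energy bound for each class
  have key : ∀ j : Fin K, ∑ t, (hbarClass K d m rm h j t) ^ 2
      ≤ (1 / (groupN K m rm : ℝ)) *
        ∑ S ∈ (msets K m).filter (fun S => j ∈ S), ∑ i ∈ Finset.range (rm S), ∑ t, (h S i t) ^ 2 := by
    intro j
    set F := (msets K m).filter (fun S => j ∈ S) with hF
    have hsig : ∀ t, ∑ S ∈ F, ∑ i ∈ Finset.range (rm S), h S i t
        = ∑ p ∈ F.sigma (fun S => Finset.range (rm S)), h p.1 p.2 t := fun t =>
      (Finset.sum_sigma' _ _ _)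
    have hcard : (F.sigma (fun S => Finset.range (rm S))).card = classN K m rm j := by
      simp [Finset.card_sigma, classN, hF]
    have step : ∀ t, (∑ S ∈ F, ∑ i ∈ Finset.range (rm S), h S i t) ^ 2
        ≤ (classN K m rm j : ℝ) * ∑ p ∈ F.sigma (fun S => Finset.range (rm S)), (h p.1 p.2 t) ^ 2 := by
      intro t
      rw [hsig t]
      have := sq_sum_le_card_mul_sum_sq (s := F.sigma (fun S => Finset.range (rm S)))
        (f := fun p => h p.1 p.2 t)
      simpa [hcard] using this
    have hclassle : (classN K m rm j : ℝ) ≤ (groupN K m rm : ℝ) := by exact_mod_cast hle j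
    calc ∑ t, (hbarClass K d m rm h j t) ^ 2
        = (1 / (groupN K m rm : ℝ))^2 * ∑ t, (∑ S ∈ F, ∑ i ∈ Finset.range (rm S), h S i t) ^ 2 := by
          simp only [hbarClass, ← hF, mul_pow]
          rw [← Finset.mul_sum]
      _ ≤ (1 / (groupN K m rm : ℝ))^2 * ∑ t, (classN K m rm j : ℝ) *
            ∑ p ∈ F.sigma (fun S => Finset.range (rm S)), (h p.1 p.2 t) ^ 2 := by
          refine mul_le_mul_of_nonneg_left (Finset.sum_le_sum fun t _ => step t) (by positivity)
      _ = (1 / (groupN K m rm : ℝ))^2 * (classN K m rm j : ℝ) *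
            ∑ p ∈ F.sigma (fun S => Finset.range (rm S)), ∑ t, (h p.1 p.2 t) ^ 2 := by
          rw [← Finset.mul_sum, Finset.sum_comm, mul_assoc]
      _ ≤ (1 / (groupN K m rm : ℝ))^2 * (groupN K m rm : ℝ) *
            ∑ p ∈ F.sigma (fun S => Finset.range (rm S)), ∑ t, (h p.1 p.2 t) ^ 2 := by
          refine mul_le_mul_of_nonneg_right (mul_le_mul_of_nonneg_left hclassle (by positivity)) ?_
          exact Finset.sum_nonneg fun p _ => Finset.sum_nonneg fun t _ => sq_nonneg _
      _ = (1 / (groupN K m rm : ℝ)) *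
            ∑ S ∈ F, ∑ i ∈ Finset.range (rm S), ∑ t, (h S i t) ^ 2 := by
          rw [Finset.sum_sigma]
          field_simp
  -- sum over j
  have hsum : ∑ j : Fin K, (1 / (groupN K m rm : ℝ)) *
      ∑ S ∈ (msets K m).filter (fun S => j ∈ S), ∑ i ∈ Finset.range (rm S), ∑ t, (h S i t) ^ 2
      = ((m : ℝ) / (groupN K m rm : ℝ)) * energy K d m rm h := by
    rw [← Finset.mul_sum]
    have : ∑ j : Fin K, ∑ S ∈ (msets K m).filter (fun S => j ∈ S),
        (∑ i ∈ Finset.range (rm S), ∑ t, (h S i t) ^ 2)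
        = ∑ S ∈ msets K m, (S.card : ℝ) * ∑ i ∈ Finset.range (rm S), ∑ t, (h S i t) ^ 2 := by
      simp only [Finset.sum_filter]
      rw [Finset.sum_comm]
      refine Finset.sum_congr rfl fun S hS => ?_
      rw [Finset.sum_ite_mem, Finset.univ_inter, Finset.sum_const, nsmul_eq_mul]
    rw [this]
    have hc : ∀ S ∈ msets K m, (S.card : ℝ) * (∑ i ∈ Finset.range (rm S), ∑ t, (h S i t) ^ 2)
        = (m : ℝ) * (∑ i ∈ Finset.range (rm S), ∑ t, (h S i t) ^ 2) := fun S hS => by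
      rw [(Finset.mem_powersetCard.1 hS).2]
    rw [Finset.sum_congr rfl hc, ← Finset.mul_sum, energy]
    ring
  have hen : 0 ≤ energy K d m rm h :=
    Finset.sum_nonneg fun S _ => Finset.sum_nonneg fun i _ => Finset.sum_nonneg fun t _ => sq_nonneg _
  calc ∑ j : Fin K, ∑ t, (hbarClass K d m rm h j t) ^ 2
      ≤ ∑ j : Fin K, (1 / (groupN K m rm : ℝ)) *
          ∑ S ∈ (msets K m).filter (fun S => j ∈ S), ∑ i ∈ Finset.range (rm S), ∑ t, (h S i t) ^ 2 :=
        Finset.sum_le_sum fun j _ => key j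
    _ = ((m : ℝ) / (groupN K m rm : ℝ)) * energy K d m rm h := hsum
    _ ≤ maxRare K m rm * energy K d m rm h := mul_le_mul_of_nonneg_right hmax hen
end
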